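/- arXiv:1008.3142 — 5 statements merged into one kernel-verified Lean document; each statement's English description precedes it below -/
import Mathlib

section
/- For each odd positive integer i, the polynomial p_i(y) = Σ_{n=0}^{(i-1)/2} (-1)^n C(i,2n) y^{2n} (1-y^2)^{(i-1)/2-n} has degree exactly i-1 and leading coefficient 2^{i-1} (-1)^{(i-1)/2}. -/
/-!
Write `i = 2m + 1`. Each summand `C aₙ · X^(2n) · (1 - X²)^(m-n)` has degree at most `2m`, with
`X^(2m)`-coefficient `aₙ (-1)^(m-n) = (-1)^m C(2m+1, 2n)`. Summing, the top coefficient is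
`(-1)^m` times the sum of the even-indexed entries of row `2m + 1` of Pascal's triangle, which is
`2^(2m)`: the reflection `k ↦ 2m + 1 - k` swaps even and odd entries, so each parity carries half
of `2^(2m+1)`.
-/

open Polynomial Finset

theorem Finset.sum_range_two_mul {M : Type*} [AddCommMonoid M] (f : ℕ → M) (m : ℕ) :
    ∑ k ∈ range (2 * m), f k = ∑ n ∈ range m, (f (2 * n) + f (2 * n + 1)) := by
  induction m with
  | zero => simp
  | succ m ih => rw [Nat.mul_succ, sum_range_succ, sum_range_succ, sum_range_succ, ih, add_assoc]

theorem Nat.sum_range_choose_two_mul_add_one_two_mul (m : ℕ) :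
    ∑ n ∈ range (m + 1), (2 * m + 1).choose (2 * n) = 2 ^ (2 * m) := by
  have hodd : ∑ n ∈ range (m + 1), (2 * m + 1).choose (2 * n + 1)
      = ∑ n ∈ range (m + 1), (2 * m + 1).choose (2 * n) := by
    rw [← sum_range_reflect]
    refine sum_congr rfl fun n hn => Nat.choose_symm_of_eq_add ?_
    have := mem_range.mp hn
    omega
  have hall := Nat.sum_range_choose (2 * m + 1)
  rw [show 2 * m + 1 + 1 = 2 * (m + 1) by ring, sum_range_two_mul, sum_add_distrib, hodd,
    pow_succ] at hall
  omega

section OneSubXSq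

variable {R : Type*} [CommRing R]

theorem natDegree_one_sub_X_sq_le : (1 - X ^ 2 : R[X]).natDegree ≤ 2 := by
  compute_degree

theorem natDegree_X_pow_mul_one_sub_X_sq_pow_le (j k : ℕ) :
    (X ^ (2 * j) * (1 - X ^ 2 : R[X]) ^ k).natDegree ≤ 2 * (j + k) := by
  refine natDegree_mul_le.trans ?_
  have := natDegree_pow_le_of_le k (natDegree_one_sub_X_sq_le (R := R))
  have := natDegree_X_pow_le (R := R) (2 * j)
  omega

theorem coeff_X_pow_mul_one_sub_X_sq_pow (j k : ℕ) :
    (X ^ (2 * j) * (1 - X ^ 2 : R[X]) ^ k).coeff (2 * (j + k)) = (-1) ^ k := by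
  rw [show 2 * (j + k) = k * 2 + 2 * j by ring, coeff_X_pow_mul,
    coeff_pow_of_natDegree_le natDegree_one_sub_X_sq_le]
  simp [coeff_one, coeff_X_pow]

theorem natDegree_sum_C_mul_X_pow_mul_one_sub_X_sq_pow_le (a : ℕ → R) (m : ℕ) :
    (∑ n ∈ range (m + 1), C (a n) * X ^ (2 * n) * (1 - X ^ 2) ^ (m - n)).natDegree ≤ 2 * m := by
  refine natDegree_sum_le_of_forall_le _ _ fun n hn => ?_
  have := mem_range.mp hn
  rw [mul_assoc]
  refine natDegree_C_mul_le _ _ |>.trans ?_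
  have := natDegree_X_pow_mul_one_sub_X_sq_pow_le (R := R) n (m - n)
  omega

theorem coeff_sum_C_mul_X_pow_mul_one_sub_X_sq_pow (a : ℕ → R) (m : ℕ) :
    (∑ n ∈ range (m + 1), C (a n) * X ^ (2 * n) * (1 - X ^ 2) ^ (m - n)).coeff (2 * m)
      = ∑ n ∈ range (m + 1), a n * (-1) ^ (m - n) := by
  rw [finsetSum_coeff]
  refine sum_congr rfl fun n hn => ?_
  have := mem_range.mp hn
  rw [mul_assoc, coeff_C_mul, show 2 * m = 2 * (n + (m - n)) by omega,
    coeff_X_pow_mul_one_sub_X_sq_pow]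

end OneSubXSq

theorem p_odd_degree_leadingCoeff_general (i : ℕ) (hi : Odd i) :
    let p : Polynomial ℝ :=
      ∑ n ∈ Finset.range ((i - 1) / 2 + 1),
        Polynomial.C ((-1 : ℝ) ^ n * (i.choose (2 * n))) * Polynomial.X ^ (2 * n) *
          (1 - Polynomial.X ^ 2) ^ ((i - 1) / 2 - n)
    p.natDegree = i - 1 ∧ p.leadingCoeff = 2 ^ (i - 1) * (-1 : ℝ) ^ ((i - 1) / 2) := by
  intro p
  obtain ⟨m, rfl⟩ := hi
  have hm : 2 * m / 2 = m := by omega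
  simp only [p, Nat.add_sub_cancel, hm]
  have hcoeff := coeff_sum_C_mul_X_pow_mul_one_sub_X_sq_pow
    (fun n => (-1 : ℝ) ^ n * ((2 * m + 1).choose (2 * n))) m
  have hterm : ∀ n ∈ range (m + 1),
      (-1 : ℝ) ^ n * ((2 * m + 1).choose (2 * n)) * (-1) ^ (m - n)
        = (-1) ^ m * ((2 * m + 1).choose (2 * n)) := fun n hn => by
    rw [mul_right_comm, ← pow_add, Nat.add_sub_cancel' (Nat.lt_succ_iff.mp (mem_range.mp hn))]
  rw [sum_congr rfl hterm, ← mul_sum] at hcoeff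
  push_cast [← Nat.cast_sum, Nat.sum_range_choose_two_mul_add_one_two_mul] at hcoeff
  have hdeg := natDegree_eq_of_le_of_coeff_ne_zero
    (natDegree_sum_C_mul_X_pow_mul_one_sub_X_sq_pow_le _ m) (by rw [hcoeff]; positivity)
  exact ⟨hdeg, by rw [leadingCoeff, hdeg, hcoeff, mul_comm]⟩

/-- For odd `i`, the polynomial `p_i` with `cos (i x) = cos x · p_i (sin x)` has
degree exactly `i - 1` and leading coefficient `2^(i-1) · (-1)^((i-1)/2)`. -/
theorem p_odd_degree_leadingCoeff (i : ℕ) (hi : Odd i) (hpos : 0 < i) :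
    let p : Polynomial ℝ :=
      ∑ n ∈ Finset.range ((i - 1) / 2 + 1),
        Polynomial.C ((-1 : ℝ) ^ n * (i.choose (2 * n))) * Polynomial.X ^ (2 * n) *
          (1 - Polynomial.X ^ 2) ^ ((i - 1) / 2 - n)
    p.natDegree = i - 1 ∧ p.leadingCoeff = 2 ^ (i - 1) * (-1 : ℝ) ^ ((i - 1) / 2) :=
  p_odd_degree_leadingCoeff_general i hi
end

section
/- For every positive integer k and all x_1, ..., x_k ∈ ℝ, the determinant of the k×k matrix whose (i,j)-entry is cos(i x_j) if i is odd and sin(i x_j) if i is even has absolute value equal to 2^{k(k-1)/2} · |∏_{1≤i<j≤k} (sin x_j - sin x_i)| · ∏_{i=1}^k |cos x_i|. -/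
/-!
Writing `θ = π/2 - x`, every row function `cos (n x)` (`n` odd) or `sin (n x)` (`n` even) is,
up to a sign independent of `x`, `sin (n θ) = U_{n-1}(cos θ) sin θ = U_{n-1}(sin x) cos x`.
Pulling the signs out of the rows and the factors `cos x_j` out of the columns leaves the matrix
`(U_{i-1}(sin x_j))`, whose determinant is the Vandermonde determinant in the `sin x_j` times the
product `2^(0 + 1 + ⋯ + (k-1))` of the leading coefficients of `U_0, …, U_{k-1}`.
-/

open Matrix Polynomial Polynomial.Chebyshev Real

namespace Matrix

theorem det_eval_matrixOfPolynomials_eq_prod_leadingCoeff_mul {R : Type*} [CommRing R] {n : ℕ}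
    (v : Fin n → R) (p : Fin n → R[X]) (h_deg : ∀ i, (p i).natDegree = i) :
    (of fun i j => (p j).eval (v i)).det = (∏ i, (p i).leadingCoeff) * (vandermonde v).det := by
  rw [eval_matrixOfPolynomials_eq_vandermonde_mul_matrixOfPolynomials v p (fun i ↦ (h_deg i).le),
    det_mul, mul_comm, det_of_isUpperTriangular
      (matrixOfPolynomials_blockTriangular p fun i ↦ (h_deg i).le)]
  congr 1
  refine Finset.prod_congr rfl fun i _ ↦ ?_
  rw [of_apply, leadingCoeff, h_deg]

theorem det_eval_chebyshevU {R : Type*} [CommRing R] [IsDomain R] [NeZero (2 : R)] {n : ℕ}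
    (v : Fin n → R) :
    (of fun i j : Fin n => (U R (j : ℕ)).eval (v i)).det =
      2 ^ (n * (n - 1) / 2) * ∏ i : Fin n, ∏ j ∈ Finset.Ioi i, (v j - v i) := by
  rw [det_eval_matrixOfPolynomials_eq_prod_leadingCoeff_mul v _ fun i ↦ natDegree_U_natCast R i,
    det_vandermonde]
  simp only [leadingCoeff_U_natCast, Finset.prod_pow_eq_pow_sum,
    Fin.sum_univ_eq_sum_range (fun i ↦ i) n, Finset.sum_range_id]

end Matrix

namespace Real

theorem cos_eq_sin_mul_sin_sub {a : ℝ} (h : cos a = 0) (y : ℝ) : cos y = sin a * sin (a - y) := by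
  have hsq := sin_sq_add_cos_sq a
  rw [h] at hsq
  rw [sin_sub, h]
  linear_combination (-cos y) * hsq

theorem sin_eq_neg_cos_mul_sin_sub {a : ℝ} (h : sin a = 0) (y : ℝ) :
    sin y = -cos a * sin (a - y) := by
  have hsq := sin_sq_add_cos_sq a
  rw [h] at hsq
  rw [sin_sub, h]
  linear_combination (-sin y) * hsq

theorem abs_sin_eq_one_of_cos_eq_zero {a : ℝ} (h : cos a = 0) : |sin a| = 1 := by
  have hsq := sin_sq_add_cos_sq a
  rw [h, zero_pow two_ne_zero, add_zero, sq_eq_one_iff] at hsq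
  rcases hsq with h1 | h1 <;> simp [h1]

theorem abs_cos_eq_one_of_sin_eq_zero {a : ℝ} (h : sin a = 0) : |cos a| = 1 := by
  have hsq := sin_sq_add_cos_sq a
  rw [h, zero_pow two_ne_zero, zero_add, sq_eq_one_iff] at hsq
  rcases hsq with h1 | h1 <;> simp [h1]

theorem chebyshevU_eval_sin_mul_cos (n : ℤ) (x : ℝ) :
    (U ℝ n).eval (sin x) * cos x = sin ((n + 1) * (π / 2) - (n + 1) * x) := by
  have h := U_real_cos (π / 2 - x) n
  rwa [cos_pi_div_two_sub, sin_pi_div_two_sub, mul_sub] at h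

theorem exists_abs_eq_one_cos_or_sin_eq_mul_chebyshevU (n : ℕ) :
    ∃ ε : ℝ, |ε| = 1 ∧ ∀ x : ℝ,
      (if Odd (n + 1) then cos ((n + 1) * x) else sin ((n + 1) * x)) =
        ε * ((U ℝ n).eval (sin x) * cos x) := by
  have hU (x : ℝ) :
      (U ℝ n).eval (sin x) * cos x = sin ((n + 1) * (π / 2) - (n + 1) * x) := by
    exact_mod_cast chebyshevU_eval_sin_mul_cos n x
  simp only [hU]
  split_ifs with hn
  · obtain ⟨m, hm⟩ := hn
    have hcos : cos ((n + 1) * (π / 2)) = 0 := cos_eq_zero_iff.2 ⟨m, by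
      rw [show (n : ℝ) + 1 = 2 * m + 1 by exact_mod_cast hm]; push_cast; ring⟩
    exact ⟨_, abs_sin_eq_one_of_cos_eq_zero hcos, fun x ↦ cos_eq_sin_mul_sin_sub hcos _⟩
  · obtain ⟨m, hm⟩ := Nat.not_odd_iff_even.1 hn
    have hsin : sin ((n + 1) * (π / 2)) = 0 := by
      rw [← sin_nat_mul_pi m, show (n : ℝ) + 1 = m + m by exact_mod_cast hm]; ring_nf
    exact ⟨_, by rw [abs_neg, abs_cos_eq_one_of_sin_eq_zero hsin],
      fun x ↦ sin_eq_neg_cos_mul_sin_sub hsin _⟩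

end Real

theorem abs_det_trig_A_general (k : ℕ) (x : Fin k → ℝ) :
    |Matrix.det (Matrix.of fun i j : Fin k =>
        if Odd ((i : ℕ) + 1) then Real.cos (((i : ℕ) + 1) * x j)
        else Real.sin (((i : ℕ) + 1) * x j))| =
      2 ^ (k * (k - 1) / 2) *
        |∏ i : Fin k, ∏ j ∈ Finset.Ioi i, (Real.sin (x j) - Real.sin (x i))| *
        ∏ i : Fin k, |Real.cos (x i)| := by
  choose ε hε_abs hε using exists_abs_eq_one_cos_or_sin_eq_mul_chebyshevU
  have hfactor : (of fun i j : Fin k =>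
        if Odd ((i : ℕ) + 1) then cos (((i : ℕ) + 1) * x j) else sin (((i : ℕ) + 1) * x j)) =
      diagonal (fun i : Fin k => ε i) * (of fun i j : Fin k => (U ℝ (j : ℕ)).eval (sin (x i)))ᵀ *
        diagonal (fun j => cos (x j)) := by
    ext i j
    rw [of_apply, hε, mul_diagonal, diagonal_mul, transpose_apply, of_apply]
    ring
  rw [hfactor, det_mul, det_mul, det_diagonal, det_diagonal, det_transpose, det_eval_chebyshevU]
  simp only [abs_mul, Finset.abs_prod, hε_abs, Finset.prod_const_one, abs_pow, abs_two]
  ring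

/-- Type A: the determinant of the matrix whose `(i,j)` entry is `cos (i x_j)` for odd `i`
and `sin (i x_j)` for even `i` (`i, j = 1, …, k`) has absolute value
`2^(k(k-1)/2) · |∏_{i<j} (sin x_j - sin x_i)| · ∏_i |cos x_i|`. -/
theorem abs_det_trig_A (k : ℕ) (hk : 0 < k) (x : Fin k → ℝ) :
    |Matrix.det (Matrix.of fun i j : Fin k =>
        if Odd ((i : ℕ) + 1) then Real.cos (((i : ℕ) + 1) * x j)
        else Real.sin (((i : ℕ) + 1) * x j))| =
      2 ^ (k * (k - 1) / 2) *
        |∏ i : Fin k, ∏ j ∈ Finset.Ioi i, (Real.sin (x j) - Real.sin (x i))| *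
        ∏ i : Fin k, |Real.cos (x i)| :=
  abs_det_trig_A_general k x
end

section
/- For integers l_1 < l_2 < ... < l_k with l_i ≥ i for all i, writing h_A for the Vandermonde product and id = (1,...,k), one has the bound ln(h_A(l)/h_A(id)) ≤ Σ_{i: l_i > i} (l_i + i)(l_i − i). -/
/-!
Write `x_j = l_j - j` (0-based `j`), so `x_j ≥ 1`. For `i < j` the elementary inequality
`x + d - 1 ≤ x d` (valid for `x, d ≥ 1`) together with `l_i ≥ i + 1` gives
`l_j - l_i ≤ x_j (j - i)`, so each factor of `h_A(l)/h_A(id)` with larger index `j` is at most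
`x_j`. There are `j` such factors, whence `ln (h_A(l)/h_A(id)) ≤ ∑_j j ln x_j ≤ ∑_j j (x_j - 1)`,
and `j (x_j - 1)` is dominated by `(l_j + j + 1)(l_j - j - 1)`, which vanishes when `l_j = j + 1`.
-/

open Finset Real

theorem Real.log_prod_prod_div {ι κ : Type*} (s : Finset ι) (t : ι → Finset κ)
    (f g : ι → κ → ℝ) (hf : ∀ i ∈ s, ∀ j ∈ t i, f i j ≠ 0) (hg : ∀ i ∈ s, ∀ j ∈ t i, g i j ≠ 0) :
    log ((∏ i ∈ s, ∏ j ∈ t i, f i j) / ∏ i ∈ s, ∏ j ∈ t i, g i j) =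
      ∑ i ∈ s, ∑ j ∈ t i, log (f i j / g i j) := by
  have hfg : ∀ i ∈ s, ∀ j ∈ t i, f i j / g i j ≠ 0 := fun i hi j hj =>
    div_ne_zero (hf i hi j hj) (hg i hi j hj)
  simp_rw [← prod_div_distrib]
  rw [log_prod fun i hi => prod_ne_zero_iff.mpr (hfg i hi)]
  exact sum_congr rfl fun i hi => log_prod (hfg i hi)

theorem Finset.sum_sum_Ioi_eq_sum_card_Iio_nsmul {α M : Type*} [LinearOrder α] [Fintype α]
    [LocallyFiniteOrderTop α] [LocallyFiniteOrderBot α] [AddCommMonoid M] (f : α → M) :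
    ∑ i, ∑ j ∈ Ioi i, f j = ∑ j, #(Iio j) • f j := by
  rw [sum_comm' (t' := univ) (s' := Iio) (by simp)]
  simp_rw [sum_const]

theorem Real.log_sub_div_sub_le_log_sub {a b x y : ℝ} (hab : a < b) (ha : x + 1 ≤ a)
    (hb : y + 1 ≤ b) (hxy : x + 1 ≤ y) : log ((b - a) / (y - x)) ≤ log (b - y) := by
  have hyx : 0 < y - x := by linarith
  have key : b - a ≤ (b - y) * (y - x) := by
    nlinarith [mul_nonneg (by linarith : 0 ≤ b - y - 1) (by linarith : 0 ≤ y - x - 1)]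
  exact log_le_log (div_pos (by linarith) hyx) ((div_le_iff₀ hyx).mpr key)

theorem Real.mul_log_sub_le {x b : ℝ} (hx : 0 ≤ x) (hb : x + 1 ≤ b) :
    x * log (b - x) ≤ (b + (x + 1)) * (b - (x + 1)) := by
  have hlog : log (b - x) ≤ b - x - 1 := log_le_sub_one_of_pos (by linarith)
  nlinarith [mul_le_mul_of_nonneg_left hlog hx]

/-- Bound on the ratio of Vandermonde determinants: for strictly increasing `l` with
`l_i ≥ i` (1-based), `ln (h_A(l)/h_A(id)) ≤ Σ_{i : l_i > i} (l_i + i)(l_i − i)`. -/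
theorem log_vandermonde_ratio_bound (k : ℕ) (l : Fin k → ℕ) (hl : StrictMono l)
    (hge : ∀ i : Fin k, (i : ℕ) + 1 ≤ l i) :
    Real.log ((∏ i : Fin k, ∏ j ∈ Finset.Ioi i, ((l j : ℝ) - (l i : ℝ))) /
        (∏ i : Fin k, ∏ j ∈ Finset.Ioi i, ((j : ℕ) - (i : ℕ) : ℝ))) ≤
      ∑ i ∈ Finset.univ.filter (fun i : Fin k => (i : ℕ) + 1 < l i),
        ((l i : ℝ) + ((i : ℕ) + 1)) * ((l i : ℝ) - ((i : ℕ) + 1)) := by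
  have hge' : ∀ i : Fin k, ((i : ℕ) : ℝ) + 1 ≤ l i := fun i => by exact_mod_cast hge i
  have hlt : ∀ i : Fin k, ∀ j ∈ Ioi i, ((i : ℕ) : ℝ) + 1 ≤ (j : ℕ) := fun i j hj => by
    exact_mod_cast (Fin.lt_def.mp (mem_Ioi.mp hj))
  have hvanish : ∀ i ∈ univ, ((l i : ℝ) + ((i : ℕ) + 1)) * ((l i : ℝ) - ((i : ℕ) + 1)) ≠ 0 →
      (i : ℕ) + 1 < l i := fun i _ hne => by
    refine (hge i).lt_of_ne fun heq => hne ?_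
    rw [← heq]
    push_cast
    ring
  calc _ = ∑ i : Fin k, ∑ j ∈ Ioi i, log ((l j - l i : ℝ) / ((j : ℕ) - (i : ℕ))) :=
        log_prod_prod_div _ _ _ _
          (fun i _ j hj => sub_ne_zero.mpr (by exact_mod_cast (hl (mem_Ioi.mp hj)).ne'))
          (fun i _ j hj => by linarith [hlt i j hj])
    _ ≤ ∑ i : Fin k, ∑ j ∈ Ioi i, log ((l j : ℝ) - (j : ℕ)) :=
        sum_le_sum fun i _ => sum_le_sum fun j hj =>
          log_sub_div_sub_le_log_sub (by exact_mod_cast hl (mem_Ioi.mp hj)) (hge' i) (hge' j)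
            (hlt i j hj)
    _ = ∑ j : Fin k, ((j : ℕ) : ℝ) * log ((l j : ℝ) - (j : ℕ)) := by
        simp [sum_sum_Ioi_eq_sum_card_Iio_nsmul]
    _ ≤ ∑ j : Fin k, ((l j : ℝ) + ((j : ℕ) + 1)) * ((l j : ℝ) - ((j : ℕ) + 1)) :=
        sum_le_sum fun j _ => mul_log_sub_le (Nat.cast_nonneg _) (hge' j)
    _ = _ := (sum_filter_of_ne hvanish).symm
end

section
/- Let c > 0 and k ≥ 1. Then Σ over all strictly increasing multi-indices l ∈ ℕ^k with l ≠ (1,2,...,k) of exp(−c Σ_{i=1}^k (l_i² − i²)) ≤ (1 − e^{−c})^{−k} e^{−ck}. -/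
open Finset Real

/-! Write `l i = i + 1 + m i` with `m i ≥ 0`. Then `l i ^ 2 - (i + 1) ^ 2 ≥ m i`, and since
`l ≠ id` forces the last entry to exceed `k`, the last term gains an extra `k`. Hence the summand
at `l` is at most `e^{-ck} ∏ i, (e^{-c}) ^ m i`; as `l ↦ m` is injective, the whole sum is
dominated by `e^{-ck}` times a product of `k` geometric series. -/

theorem HasSum.fin_pi_prod {α : Type*} {f : α → ℝ} {s : ℝ} (hf : HasSum f s) (hf0 : 0 ≤ f) (k : ℕ) :
    HasSum (fun m : Fin k → α => ∏ i, f (m i)) (s ^ k) := by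
  induction k with
  | zero => simp
  | succ k ih =>
    have hsum : Summable fun x : α × (Fin k → α) => f x.1 * ∏ i, f (x.2 i) := by
      apply hf.summable.mul_of_nonneg ih.summable hf0
      exact fun m => prod_nonneg fun i _ => hf0 (m i)
    have hcons : (fun m : Fin (k + 1) → α => ∏ i, f (m i)) ∘ Fin.consEquiv (fun _ => α) =
        fun x => f x.1 * ∏ i, f (x.2 i) := by
      ext x
      simp [Fin.consEquiv, Fin.prod_univ_succ]
    rw [pow_succ', ← (Fin.consEquiv fun _ => α).hasSum_iff, hcons]
    exact (hf.mul ih hsum :)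

theorem StrictMono.apply_add_sub_le {k : ℕ} {f : Fin k → ℕ} (hf : StrictMono f) {i j : Fin k}
    (hij : i ≤ j) : f i + (j - i : ℕ) ≤ f j := by
  obtain ⟨j, hj⟩ := j
  induction j with
  | zero => obtain rfl : i = ⟨0, hj⟩ := Fin.ext (by simpa [Fin.le_def] using hij); simp
  | succ j ih =>
    rcases hij.eq_or_lt with rfl | hlt
    · simp
    · have hprev := ih (Nat.lt_of_succ_lt hj) (Fin.le_def.2 (Nat.lt_succ_iff.1 hlt))
      have hstep : f ⟨j, Nat.lt_of_succ_lt hj⟩ < f ⟨j + 1, hj⟩ := hf (Fin.mk_lt_mk.2 j.lt_succ_self)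
      simp only [Fin.lt_def] at hlt hprev ⊢
      omega

theorem val_add_one_le_of_strictMono {k : ℕ} {f : Fin k → ℕ} (hf : StrictMono f)
    (hpos : ∀ i, 1 ≤ f i) (i : Fin k) : (i : ℕ) + 1 ≤ f i := by
  have h : f ⟨0, i.pos⟩ + (i - 0 : ℕ) ≤ f i := hf.apply_add_sub_le (Fin.le_def.2 (Nat.zero_le i))
  have := hpos ⟨0, i.pos⟩
  omega

theorem eq_val_add_one_of_strictMono {n : ℕ} {f : Fin (n + 1) → ℕ} (hf : StrictMono f)
    (hpos : ∀ i, 1 ≤ f i) (hlast : f (Fin.last n) ≤ n + 1) :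
    f = fun i : Fin (n + 1) => (i : ℕ) + 1 := by
  funext i
  have := hf.apply_add_sub_le (Fin.le_last i)
  have := val_add_one_le_of_strictMono hf hpos i
  simp only [Fin.val_last] at *
  omega

theorem Nat.cast_sub_le_sq_sub_sq {a b : ℕ} (hab : a ≤ b) :
    ((b - a : ℕ) : ℝ) ≤ (b : ℝ) ^ 2 - a ^ 2 := by
  rw [Nat.cast_sub hab]
  rcases hab.eq_or_lt with rfl | hlt
  · simp
  · have : (a : ℝ) + 1 ≤ b := by exact_mod_cast hlt
    nlinarith

theorem Nat.cast_sub_add_le_sq_sub_sq {a b : ℕ} (hab : a < b) :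
    ((b - a : ℕ) : ℝ) + a ≤ (b : ℝ) ^ 2 - a ^ 2 := by
  have : (a : ℝ) + 1 ≤ b := by exact_mod_cast hab
  rw [Nat.cast_sub hab.le]
  nlinarith [(a.cast_nonneg : (0 : ℝ) ≤ a)]

theorem add_sum_sub_le_sum_sq_sub_sq {n : ℕ} {l : Fin (n + 1) → ℕ} (hl : StrictMono l)
    (hpos : ∀ i, 1 ≤ l i) (hne : l ≠ fun i : Fin (n + 1) => (i : ℕ) + 1) :
    (n + 1 : ℝ) + ∑ i, ((l i - ((i : ℕ) + 1) : ℕ) : ℝ) ≤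
      ∑ i, ((l i : ℝ) ^ 2 - ((i : ℕ) + 1 : ℝ) ^ 2) := by
  have hlast : n + 1 < l (Fin.last n) :=
    not_le.1 fun h => hne (eq_val_add_one_of_strictMono hl hpos h)
  have hterm (i : Fin (n + 1)) : ((l i - ((i : ℕ) + 1) : ℕ) : ℝ) ≤
      (l i : ℝ) ^ 2 - ((i : ℕ) + 1 : ℝ) ^ 2 := by
    exact_mod_cast Nat.cast_sub_le_sq_sub_sq (val_add_one_le_of_strictMono hl hpos i)
  have hlast_term := Nat.cast_sub_add_le_sq_sub_sq hlast
  push_cast at hlast_term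
  rw [Fin.sum_univ_castSucc, Fin.sum_univ_castSucc]
  simp only [Fin.val_last]
  linarith [sum_le_sum fun (i : Fin n) (_ : i ∈ univ) => hterm i.castSucc]

theorem exp_neg_mul_sum_sq_sub_sq_le {n : ℕ} {l : Fin (n + 1) → ℕ} (hl : StrictMono l)
    (hpos : ∀ i, 1 ≤ l i) (hne : l ≠ fun i : Fin (n + 1) => (i : ℕ) + 1) {c : ℝ} (hc : 0 ≤ c) :
    exp (-c * ∑ i, ((l i : ℝ) ^ 2 - ((i : ℕ) + 1 : ℝ) ^ 2)) ≤
      exp (-c * (n + 1)) * ∏ i, exp (-c) ^ (l i - ((i : ℕ) + 1)) := by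
  calc exp (-c * ∑ i, ((l i : ℝ) ^ 2 - ((i : ℕ) + 1 : ℝ) ^ 2))
      ≤ exp (-c * ((n + 1 : ℝ) + ∑ i, ((l i - ((i : ℕ) + 1) : ℕ) : ℝ))) :=
        exp_le_exp.2 <| mul_le_mul_of_nonpos_left
          (add_sum_sub_le_sum_sq_sub_sq hl hpos hne) (neg_nonpos.2 hc)
    _ = exp (-c * (n + 1)) * ∏ i, exp (-c) ^ (l i - ((i : ℕ) + 1)) := by
        simp only [mul_add, exp_add, mul_sum, exp_sum, ← exp_nat_mul, mul_comm]

theorem tsum_le_of_le_comp_injective {ι κ : Type*} {f : ι → ℝ} {g : κ → ℝ} {a : ℝ}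
    (hg : HasSum g a) (hf0 : ∀ i, 0 ≤ f i) (hg0 : ∀ j, 0 ≤ g j) (e : ι → κ)
    (he : Function.Injective e) (hfg : ∀ i, f i ≤ g (e i)) : ∑' i, f i ≤ a := by
  have hf : Summable f := (hg.summable.comp_injective he).of_nonneg_of_le hf0 hfg
  rw [← hg.tsum_eq]
  exact hf.tsum_le_tsum_of_inj e he (fun j _ => hg0 j) hfg hg.summable

/-- Geometric-series bound on the sum over strictly increasing multi-indices `l ≠ id`
of `exp(−c Σ_i (l_i² − i²))`. -/
theorem sum_exp_bound (k : ℕ) (hk : 1 ≤ k) (c : ℝ) (hc : 0 < c) :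
    ∑' l : {l : Fin k → ℕ // StrictMono l ∧ (∀ i, 1 ≤ l i) ∧ l ≠ fun i : Fin k => (i : ℕ) + 1},
        Real.exp (-c * ∑ i : Fin k, ((l.1 i : ℝ) ^ 2 - (((i : ℕ) + 1 : ℝ)) ^ 2)) ≤
      ((1 - Real.exp (-c))⁻¹) ^ k * Real.exp (-c * k) := by
  obtain ⟨n, rfl⟩ : ∃ n, k = n + 1 := ⟨k - 1, by omega⟩
  have hgeom : HasSum (fun m : Fin (n + 1) → ℕ => exp (-c * (n + 1)) * ∏ i, exp (-c) ^ m i)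
      (exp (-c * (n + 1)) * (1 - exp (-c))⁻¹ ^ (n + 1)) :=
    ((hasSum_geometric_of_lt_one (exp_pos _).le (exp_lt_one_iff.2 (by linarith))).fin_pi_prod
      (fun _ => pow_nonneg (exp_pos _).le _) (n + 1)).mul_left _
  refine (tsum_le_of_le_comp_injective hgeom (fun _ => (exp_pos _).le) (fun _ => by positivity)
    (fun l i => l.1 i - ((i : ℕ) + 1)) ?_ ?_).trans_eq ?_
  · intro l l' h
    ext i
    have : l.1 i - ((i : ℕ) + 1) = l'.1 i - ((i : ℕ) + 1) := congrFun h i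
    have := val_add_one_le_of_strictMono l.2.1 l.2.2.1 i
    have := val_add_one_le_of_strictMono l'.2.1 l'.2.2.1 i
    omega
  · exact fun l => exp_neg_mul_sum_sq_sub_sq_le l.2.1 l.2.2.1 l.2.2.2 hc.le
  · push_cast
    ring
end

section
/- The functions h_C(x) = ∏_{1≤i<j≤k}(x_j² − x_i²) · ∏_{i=1}^k x_i and h_D(x) = ∏_{1≤i<j≤k}(x_j² − x_i²) are harmonic on ℝ^k, i.e., Δ h_C = 0 and Δ h_D = 0. -/
open Finset Real

/-- The Laplacian of `f : ℝ^k → ℝ`, as the sum of second derivatives of the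
one-dimensional coordinate slices. -/
noncomputable def lap {k : ℕ} (f : (Fin k → ℝ) → ℝ) (x : Fin k → ℝ) : ℝ :=
  ∑ i : Fin k, deriv (deriv (fun t => f (Function.update x i t))) (x i)

/-!
With `f_a(t) = t ^ (2a + c)`, both réduites are determinants `det M(y)`, `M(y) b a = f_a(y_b)`:
a Vandermonde determinant in the `y_b²` for `c = 0`, and the same times `∏ y_b` for `c = 1`.
Only row `b` of `M(y)` depends on `y_b`, and `det` is linear in that row, so
`Δ det M = trace (F * adjugate M)` with `F b a = f_a''(y_b)`. Since
`f_a'' = (2a+c)(2a+c-1) f_{a-1}`, and `f_0'' = 0` because `c ≤ 1`, we have `F = M * K` for a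
matrix `K` supported strictly above the diagonal, hence `Δ det M = det M * trace K = 0`.
-/

namespace Matrix

variable {n R : Type*} [Fintype n] [DecidableEq n] [CommRing R]

theorem det_updateRow_eq_sum_mul_adjugate (M : Matrix n n R) (i : n) (v : n → R) :
    (M.updateRow i v).det = ∑ j, v j * M.adjugate j i := by
  rw [← cramer_transpose_apply, cramer_eq_adjugate_mulVec, ← adjugate_transpose, mulVec,
    dotProduct]
  simp only [transpose_apply, mul_comm]

theorem trace_mul_mul_adjugate (M K : Matrix n n R) :
    (M * K * M.adjugate).trace = M.det * K.trace := by
  rw [trace_mul_comm, ← Matrix.mul_assoc, adjugate_mul, smul_mul, Matrix.one_mul, trace_smul,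
    smul_eq_mul]

end Matrix

open Matrix

theorem lap_det_eq_trace {k : ℕ} (f : Fin k → ℝ → ℝ) (hf : ∀ a, Differentiable ℝ (f a))
    (hf' : ∀ a, Differentiable ℝ (deriv (f a))) (x : Fin k → ℝ) :
    lap (fun y => (of fun b a => f a (y b)).det) x =
      (of (fun b a => deriv (deriv (f a)) (x b)) * (of fun b a => f a (x b)).adjugate).trace := by
  set M : Matrix (Fin k) (Fin k) ℝ := of fun b a => f a (x b)
  refine Finset.sum_congr rfl fun b _ => ?_
  have hslice : (fun t => (of fun b' a => f a (Function.update x b t b')).det) =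
      fun t => ∑ a, f a t * M.adjugate a b := by
    funext t
    rw [← det_updateRow_eq_sum_mul_adjugate]
    congr 1
    ext b' a
    by_cases h : b' = b
    · subst h; simp [M]
    · simp [M, updateRow_apply, h]
  have hderiv : ∀ g : Fin k → ℝ → ℝ, (∀ a, Differentiable ℝ (g a)) →
      deriv (fun t => ∑ a, g a t * M.adjugate a b) =
        fun t => ∑ a, deriv (g a) t * M.adjugate a b := by
    intro g hg
    funext t
    rw [deriv_fun_sum fun a _ => ((hg a) t).mul_const _]
    exact Finset.sum_congr rfl fun a _ => deriv_mul_const (hg a t) _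
  rw [hslice, hderiv f hf, hderiv (fun a => deriv (f a)) hf']
  rfl

theorem lap_det_eq_det_mul_trace {k : ℕ} (f : Fin k → ℝ → ℝ) (K : Matrix (Fin k) (Fin k) ℝ)
    (hf : ∀ a, Differentiable ℝ (f a)) (hf' : ∀ a, Differentiable ℝ (deriv (f a)))
    (hK : ∀ a t, deriv (deriv (f a)) t = ∑ a', f a' t * K a' a) (x : Fin k → ℝ) :
    lap (fun y => (of fun b a => f a (y b)).det) x = (of fun b a => f a (x b)).det * K.trace := by
  rw [lap_det_eq_trace f hf hf', ← trace_mul_mul_adjugate]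
  congr 3
  ext b a
  simp [hK, Matrix.mul_apply]

theorem deriv_deriv_pow (m : ℕ) (t : ℝ) :
    deriv (deriv (fun t : ℝ => t ^ m)) t = m * (m - 1) * t ^ (m - 2) := by
  have h := iter_deriv_pow m t 2
  simp only [Function.iterate_succ, Function.iterate_zero, Function.comp_apply,
    Finset.prod_range_succ, Finset.prod_range_zero] at h
  simpa using h

theorem lap_det_pow_eq_zero {k : ℕ} (c : ℕ) (hc : c ≤ 1) (x : Fin k → ℝ) :
    lap (fun y => (of fun b a : Fin k => y b ^ (2 * (a : ℕ) + c)).det) x = 0 := by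
  set K : Matrix (Fin k) (Fin k) ℝ := of fun a' a =>
    if (a' : ℕ) + 1 = a then ((2 * (a : ℕ) + c : ℕ) : ℝ) * (((2 * (a : ℕ) + c : ℕ) : ℝ) - 1) else 0
  have hK : ∀ (a : Fin k) (t : ℝ), deriv (deriv (fun t => t ^ (2 * (a : ℕ) + c))) t =
      ∑ a' : Fin k, t ^ (2 * (a' : ℕ) + c) * K a' a := by
    rintro ⟨_ | a, ha⟩ t <;> rw [deriv_deriv_pow]
    · interval_cases c <;> simp [K]
    · have hsucc : ∀ a' : Fin k, (a' : ℕ) + 1 = a + 1 ↔ a' = ⟨a, by omega⟩ := fun a' => by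
        simp [Fin.ext_iff]
      simp only [K, of_apply, mul_ite, mul_zero, hsucc, Finset.sum_ite_eq', Finset.mem_univ,
        if_true]
      rw [show 2 * (a + 1) + c - 2 = 2 * a + c by omega, mul_comm]
  have hdiff : ∀ m : ℕ, Differentiable ℝ (deriv fun t : ℝ => t ^ m) := fun m => by
    rw [show deriv (fun t : ℝ => t ^ m) = _ from funext fun t => deriv_pow_field m]
    fun_prop
  have htrace : K.trace = 0 := by simp [K, Matrix.trace]
  rw [lap_det_eq_det_mul_trace (fun a t => t ^ (2 * (a : ℕ) + c)) K (fun a => by fun_prop)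
    (fun a => hdiff _) hK, htrace, mul_zero]

theorem prod_Ioi_sq_sub_sq_eq_det {k : ℕ} (y : Fin k → ℝ) :
    ∏ i : Fin k, ∏ j ∈ Ioi i, (y j ^ 2 - y i ^ 2) =
      (of fun b a : Fin k => y b ^ (2 * (a : ℕ))).det := by
  rw [← det_vandermonde]
  congr 1
  ext b a
  simp [vandermonde_apply, pow_mul]

theorem prod_Ioi_sq_sub_sq_mul_prod_eq_det {k : ℕ} (y : Fin k → ℝ) :
    (∏ i : Fin k, ∏ j ∈ Ioi i, (y j ^ 2 - y i ^ 2)) * ∏ i, y i =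
      (of fun b a : Fin k => y b ^ (2 * (a : ℕ) + 1)).det := by
  rw [prod_Ioi_sq_sub_sq_eq_det, mul_comm, ← det_mul_column]
  simp only [pow_succ', of_apply]

/-- The réduites `h_C(x) = ∏_{i<j}(x_j² − x_i²) ∏_i x_i` and
`h_D(x) = ∏_{i<j}(x_j² − x_i²)` are harmonic on `ℝ^k`. -/
theorem reduites_CD_harmonic (k : ℕ) (x : Fin k → ℝ) :
    lap (fun y : Fin k → ℝ =>
        (∏ i : Fin k, ∏ j ∈ Finset.Ioi i, (y j ^ 2 - y i ^ 2)) * ∏ i : Fin k, y i) x = 0 ∧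
    lap (fun y : Fin k → ℝ =>
        ∏ i : Fin k, ∏ j ∈ Finset.Ioi i, (y j ^ 2 - y i ^ 2)) x = 0 := by
  simp_rw [prod_Ioi_sq_sub_sq_mul_prod_eq_det, prod_Ioi_sq_sub_sq_eq_det]
  exact ⟨lap_det_pow_eq_zero 1 le_rfl x, by simpa using lap_det_pow_eq_zero 0 zero_le_one x⟩
end
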